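/- Let λ > 0. The zero vector minimizes φ_λ(x) = (1/2)‖Ax − b‖₂² + λ‖x‖₁ over ℝⁿ if and only if λ ≥ ‖Aᵀb‖_∞. -/

import Mathlib

open scoped BigOperators
open Matrix

noncomputable section

namespace PGH

/-- Euclidean dot product on `Fin n → ℝ`. -/
def dot {n : ℕ} (x y : Fin n → ℝ) : ℝ := ∑ i, x i * y i

/-- Squared Euclidean norm. -/
def sqnorm {n : ℕ} (x : Fin n → ℝ) : ℝ := ∑ i, (x i) ^ 2

/-- Euclidean (ℓ₂) norm. -/
noncomputable def l2 {n : ℕ} (x : Fin n → ℝ) : ℝ := Real.sqrt (sqnorm x)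

/-- ℓ₁ norm. -/
def l1 {n : ℕ} (x : Fin n → ℝ) : ℝ := ∑ i, |x i|

/-- ℓ∞ norm (maximum absolute coordinate). -/
noncomputable def linf {n : ℕ} (x : Fin n → ℝ) : ℝ := ⨆ i, |x i|

/-- Support of a vector. -/
def supp {n : ℕ} (x : Fin n → ℝ) : Finset (Fin n) := Finset.univ.filter (fun i => x i ≠ 0)

/-- Number of nonzero coordinates. -/
def l0 {n : ℕ} (x : Fin n → ℝ) : ℕ := (supp x).card

/-- Number of nonzero coordinates within the index set `S`
(i.e. `‖x_S‖₀` for the restriction of `x` to `S`). -/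
def l0on {n : ℕ} (S : Finset (Fin n)) (x : Fin n → ℝ) : ℕ :=
  (S.filter (fun i => x i ≠ 0)).card

/-- ℓ₁ norm of the restriction of `x` to the index set `S`. -/
def l1on {n : ℕ} (S : Finset (Fin n)) (x : Fin n → ℝ) : ℝ := ∑ i ∈ S, |x i|

/-- Gradient of `f(x) = (1/2)‖Ax - b‖₂²`, namely `Aᵀ(Ax - b)`. -/
def grad {m n : ℕ} (A : Matrix (Fin m) (Fin n) ℝ) (b : Fin m → ℝ) (x : Fin n → ℝ) :
    Fin n → ℝ :=
  Aᵀ.mulVec (A.mulVec x - b)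

/-- Least-squares objective `f(x) = (1/2)‖Ax - b‖₂²`. -/
def fls {m n : ℕ} (A : Matrix (Fin m) (Fin n) ℝ) (b : Fin m → ℝ) (x : Fin n → ℝ) : ℝ :=
  sqnorm (A.mulVec x - b) / 2

/-- ℓ₁-regularized least-squares objective `φ_λ(x) = f(x) + λ‖x‖₁`. -/
def phi {m n : ℕ} (A : Matrix (Fin m) (Fin n) ℝ) (b : Fin m → ℝ) (lam : ℝ)
    (x : Fin n → ℝ) : ℝ :=
  fls A b x + lam * l1 x

/-- Restricted maximal eigenvalue `ρ₊(A, s)`. -/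
noncomputable def rhoPlus {m n : ℕ} (A : Matrix (Fin m) (Fin n) ℝ) (s : ℕ) : ℝ :=
  sSup {r | ∃ x : Fin n → ℝ, x ≠ 0 ∧ l0 x ≤ s ∧ r = sqnorm (A.mulVec x) / sqnorm x}

/-- Restricted minimal eigenvalue `ρ₋(A, s)`. -/
noncomputable def rhoMinus {m n : ℕ} (A : Matrix (Fin m) (Fin n) ℝ) (s : ℕ) : ℝ :=
  sInf {r | ∃ x : Fin n → ℝ, x ≠ 0 ∧ l0 x ≤ s ∧ r = sqnorm (A.mulVec x) / sqnorm x}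

/-- `ξ` is a subgradient of the ℓ₁ norm at `x`. -/
def IsSubgrad {n : ℕ} (x ξ : Fin n → ℝ) : Prop :=
  ∀ i, (x i ≠ 0 → ξ i = Real.sign (x i)) ∧ (x i = 0 → |ξ i| ≤ 1)

/-- Optimality residue `ω_λ(x) = min_{ξ ∈ ∂‖x‖₁} ‖Aᵀ(Ax−b) + λξ‖_∞`. -/
noncomputable def omega {m n : ℕ} (A : Matrix (Fin m) (Fin n) ℝ) (b : Fin m → ℝ)
    (lam : ℝ) (x : Fin n → ℝ) : ℝ :=
  sInf {r | ∃ ξ : Fin n → ℝ, IsSubgrad x ξ ∧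
    r = linf (fun i => grad A b x i + lam * ξ i)}

/-- The local model `ψ_{λ,L}(y; x)`. -/
def psi {m n : ℕ} (A : Matrix (Fin m) (Fin n) ℝ) (b : Fin m → ℝ) (lam L : ℝ)
    (y x : Fin n → ℝ) : ℝ :=
  fls A b y + dot (grad A b y) (x - y) + L / 2 * sqnorm (x - y) + lam * l1 x

/-- The noise-domination condition
`λ ≥ max{4, (γ+1)/((1−δ')γ−(1+δ'))} ⬝ ‖Aᵀz‖_∞`. -/
def noiseCond {m n : ℕ} (A : Matrix (Fin m) (Fin n) ℝ) (z : Fin m → ℝ)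
    (dp gam lam : ℝ) : Prop :=
  lam ≥ max 4 ((gam + 1) / ((1 - dp) * gam - (1 + dp))) * linf (Aᵀ.mulVec z)

/-! Around `0`, `φ_λ(x) - φ_λ(0) = ½‖Ax‖² - ⟪Aᵀb, x⟫ + λ‖x‖₁`. If `‖Aᵀb‖_∞ ≤ λ`, Hölder's
inequality makes this nonnegative. Conversely, testing `x = t eᵢ` gives
`(Aᵀb)ᵢ t ≤ ½‖Aeᵢ‖² t² + λ|t|` for every real `t`, and dividing by `t` and letting `t → 0±`
yields `|(Aᵀb)ᵢ| ≤ λ`. -/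

open Filter Topology

lemma le_of_forall_pos_mul_le {g C c : ℝ} (h : ∀ t > 0, g * t ≤ C * t ^ 2 + c * t) : g ≤ c := by
  have hdiv : ∀ t > 0, g ≤ C * t + c := fun t ht =>
    le_of_mul_le_mul_right (by nlinarith [h t ht]) ht
  have hlim : Tendsto (fun t : ℝ => C * t + c) (𝓝[>] 0) (𝓝 c) := by
    have : Continuous fun t : ℝ => C * t + c := by fun_prop
    simpa using (this.tendsto 0).mono_left nhdsWithin_le_nhds
  exact ge_of_tendsto hlim (eventually_nhdsWithin_of_forall hdiv)

lemma abs_le_of_forall_mul_le {g C c : ℝ} (h : ∀ t, g * t ≤ C * t ^ 2 + c * |t|) :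
    |g| ≤ c := by
  refine abs_le.mpr ⟨?_, ?_⟩
  · refine neg_le.mp (le_of_forall_pos_mul_le (C := C) fun t ht => ?_)
    simpa [abs_of_pos ht] using h (-t)
  · exact le_of_forall_pos_mul_le fun t ht => by simpa [abs_of_pos ht] using h t

lemma linf_le_iff {n : ℕ} {x : Fin n → ℝ} {c : ℝ} (hc : 0 ≤ c) :
    linf x ≤ c ↔ ∀ i, |x i| ≤ c :=
  ⟨fun h i => (le_ciSup (Set.finite_range _).bddAbove i).trans h,
    fun h => Real.iSup_le h hc⟩

lemma dot_le_mul_l1 {n : ℕ} {g x : Fin n → ℝ} {c : ℝ} (hg : ∀ i, |g i| ≤ c) :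
    dot g x ≤ c * l1 x := by
  rw [dot, l1, Finset.mul_sum]
  refine Finset.sum_le_sum fun i _ => ?_
  calc g i * x i ≤ |g i| * |x i| := (le_abs_self _).trans (abs_mul _ _).le
    _ ≤ c * |x i| := mul_le_mul_of_nonneg_right (hg i) (abs_nonneg _)

lemma sqnorm_eq_dotProduct {n : ℕ} (x : Fin n → ℝ) : sqnorm x = x ⬝ᵥ x := by
  simp only [sqnorm, dotProduct, sq]

lemma sqnorm_nonneg {n : ℕ} (x : Fin n → ℝ) : 0 ≤ sqnorm x :=
  Finset.sum_nonneg fun i _ => sq_nonneg (x i)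

lemma dot_transpose_mulVec {m n : ℕ} (A : Matrix (Fin m) (Fin n) ℝ) (b : Fin m → ℝ)
    (x : Fin n → ℝ) : dot (Aᵀ *ᵥ b) x = b ⬝ᵥ (A *ᵥ x) := by
  rw [dotProduct_mulVec, ← mulVec_transpose]
  rfl

lemma phi_eq_phi_zero_add {m n : ℕ} (A : Matrix (Fin m) (Fin n) ℝ) (b : Fin m → ℝ)
    (lam : ℝ) (x : Fin n → ℝ) :
    phi A b lam x = phi A b lam 0 +
      (sqnorm (A *ᵥ x) / 2 - dot (Aᵀ *ᵥ b) x + lam * l1 x) := by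
  simp only [phi, fls, l1, sqnorm_eq_dotProduct, dot_transpose_mulVec, mulVec_zero,
    zero_sub, neg_dotProduct, dotProduct_neg, neg_neg, Pi.zero_apply, abs_zero,
    Finset.sum_const_zero, mul_zero, add_zero, sub_dotProduct, dotProduct_sub,
    dotProduct_comm (A *ᵥ x) b]
  ring

lemma phi_single {m n : ℕ} (A : Matrix (Fin m) (Fin n) ℝ) (b : Fin m → ℝ)
    (lam : ℝ) (i : Fin n) (t : ℝ) :
    phi A b lam (Pi.single i t) = phi A b lam 0 +
      (sqnorm (A.col i) / 2 * t ^ 2 - (Aᵀ *ᵥ b) i * t + lam * |t|) := by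
  have hsq : sqnorm (A *ᵥ Pi.single i t) = sqnorm (A.col i) * t ^ 2 := by
    simp only [sqnorm, mulVec_single, Finset.sum_mul]
    exact Finset.sum_congr rfl fun j _ => by simp [mul_pow, mul_comm]
  have hdot : dot (Aᵀ *ᵥ b) (Pi.single i t) = (Aᵀ *ᵥ b) i * t := by
    simp [dot, Pi.single_apply]
  have hl1 : l1 (Pi.single i t) = |t| := by
    simp [l1, Pi.single_apply, apply_ite abs]
  rw [phi_eq_phi_zero_add, hsq, hdot, hl1]
  ring

theorem stmt14 {m n : ℕ} (A : Matrix (Fin m) (Fin n) ℝ) (b : Fin m → ℝ)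
    (lam : ℝ) (hlam : 0 < lam) :
    (∀ x : Fin n → ℝ, phi A b lam 0 ≤ phi A b lam x) ↔ linf (Aᵀ.mulVec b) ≤ lam := by
  rw [linf_le_iff hlam.le]
  constructor
  · intro hmin i
    refine abs_le_of_forall_mul_le (C := sqnorm (A.col i) / 2) fun t => ?_
    linarith [hmin (Pi.single i t), phi_single A b lam i t]
  · intro hg x
    linarith [phi_eq_phi_zero_add A b lam x, dot_le_mul_l1 (x := x) hg, sqnorm_nonneg (A *ᵥ x)]

end PGH
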